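/- arXiv:1504.03809 — 4 statements merged into one kernel-verified Lean document; each statement's English description precedes it below -/
import Mathlib

section
/- For τ₀, τ₁ ∈ (0, 1/2), if g(τ₀, 2) > 2·g(τ₁, 3) where g(x,k) = x^{kx}(1-x)^{k(1-x)}, then τ₀ < τ₁. -/
/-!
Writing `H` for the binary entropy in nats, `x ^ (k x) (1 - x) ^ (k (1 - x)) = exp (-k H(x))`.
If `τ₁ ≤ τ₀` then, `H` being increasing on `[0, 1/2]`, `H(τ₁) ≤ H(τ₀) ≤ log 2`, whence
`-2 H(τ₀) ≤ -2 H(τ₁) ≤ log 2 - 3 H(τ₁)`, i.e. `g(τ₀, 2) ≤ 2 g(τ₁, 3)`.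
-/

open Real

lemma rpow_mul_mul_one_sub_rpow_eq_exp_binEntropy (k : ℝ) {x : ℝ} (hx₀ : 0 < x) (hx₁ : x < 1) :
    x ^ (k * x) * (1 - x) ^ (k * (1 - x)) = exp (-(k * binEntropy x)) := by
  rw [rpow_def_of_pos hx₀, rpow_def_of_pos (sub_pos.2 hx₁), ← exp_add, binEntropy, log_inv,
    log_inv]
  ring_nf

lemma exp_neg_two_mul_binEntropy_le {x y : ℝ} (hy : y ∈ Set.Icc (0 : ℝ) 2⁻¹)
    (hx : x ∈ Set.Icc (0 : ℝ) 2⁻¹) (hyx : y ≤ x) :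
    exp (-(2 * binEntropy x)) ≤ 2 * exp (-(3 * binEntropy y)) := by
  have hmono : binEntropy y ≤ binEntropy x := binEntropy_strictMonoOn.monotoneOn hy hx hyx
  have hlog : binEntropy y ≤ log 2 := binEntropy_le_log_two
  calc exp (-(2 * binEntropy x)) ≤ exp (log 2 + -(3 * binEntropy y)) :=
        exp_le_exp.2 (by linarith)
    _ = 2 * exp (-(3 * binEntropy y)) := by rw [exp_add, exp_log two_pos]

/-- For `τ₀, τ₁ ∈ (0, 1/2)`, if `g(τ₀, 2) > 2·g(τ₁, 3)` where
`g(x,k) = x^{kx}(1-x)^{k(1-x)}`, then `τ₀ < τ₁`: the relation `◁` refines `<` on `(0,1/2)`. -/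
theorem suff_less_implies_less (τ₀ τ₁ : ℝ)
    (h₀ : τ₀ ∈ Set.Ioo (0 : ℝ) (1/2)) (h₁ : τ₁ ∈ Set.Ioo (0 : ℝ) (1/2))
    (h : τ₀ ^ ((2:ℝ)*τ₀) * (1 - τ₀) ^ ((2:ℝ)*(1 - τ₀)) >
      2 * (τ₁ ^ ((3:ℝ)*τ₁) * (1 - τ₁) ^ ((3:ℝ)*(1 - τ₁)))) :
    τ₀ < τ₁ := by
  obtain ⟨h₀pos, h₀half⟩ := h₀
  obtain ⟨h₁pos, h₁half⟩ := h₁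
  rw [rpow_mul_mul_one_sub_rpow_eq_exp_binEntropy _ h₀pos (by linarith),
    rpow_mul_mul_one_sub_rpow_eq_exp_binEntropy _ h₁pos (by linarith)] at h
  by_contra! hle
  exact h.not_ge <| exp_neg_two_mul_binEntropy_le ⟨h₁pos.le, by linarith⟩
    ⟨h₀pos.le, by linarith⟩ hle
end

section
/- For τ₀, τ₁ ∈ (0, 1/2), if g(τ₀, 8) > 2^{19}·g(τ₁, 27) where g(x,k) = x^{kx}(1-x)^{k(1-x)}, then g(τ₀,2) > 2·g(τ₁,3); that is, the 3-dimensional sufficient-inequality relation implies the 2-dimensional one. -/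
lemma rpow_natmul (x t : ℝ) (hx : 0 ≤ x) (k : ℕ) :
    x ^ ((k : ℝ) * t) = (x ^ t) ^ k := by
  rw [mul_comm, Real.rpow_mul hx, Real.rpow_natCast]

lemma gmean_half (τ : ℝ) (h0 : 0 < τ) (h1 : τ < 1) :
    (1 : ℝ) ≤ 2 * (τ ^ τ * (1 - τ) ^ (1 - τ)) := by
  have h1τ : 0 < 1 - τ := by linarith
  have hB0 : 0 < τ ^ τ * (1 - τ) ^ (1 - τ) :=
    mul_pos (Real.rpow_pos_of_pos h0 _) (Real.rpow_pos_of_pos h1τ _)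
  have hag := Real.geom_mean_le_arith_mean2_weighted (le_of_lt h0) (le_of_lt h1τ)
    (le_of_lt (inv_pos.mpr h0)) (le_of_lt (inv_pos.mpr h1τ)) (by ring)
  rw [Real.inv_rpow (le_of_lt h0), Real.inv_rpow (le_of_lt h1τ),
    mul_inv_cancel₀ (ne_of_gt h0), mul_inv_cancel₀ (ne_of_gt h1τ)] at hag
  have hinv : (τ ^ τ * (1 - τ) ^ (1 - τ))⁻¹ ≤ 2 := by
    rw [mul_inv]; linarith
  nlinarith [inv_mul_cancel₀ (ne_of_gt hB0)]

/-- For `τ₀, τ₁ ∈ (0, 1/2)`, if `g(τ₀, 8) > 2^{19}·g(τ₁, 27)` where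
`g(x,k) = x^{kx}(1-x)^{k(1-x)}`, then `g(τ₀, 2) > 2·g(τ₁, 3)`: the 3-dimensional
sufficient-inequality relation `⧀` implies the 2-dimensional one `◁`. -/
theorem suff_less_3d_implies_2d (τ₀ τ₁ : ℝ)
    (h₀ : τ₀ ∈ Set.Ioo (0 : ℝ) (1/2)) (h₁ : τ₁ ∈ Set.Ioo (0 : ℝ) (1/2))
    (h : τ₀ ^ ((8:ℝ)*τ₀) * (1 - τ₀) ^ ((8:ℝ)*(1 - τ₀)) >
      2 ^ (19:ℕ) * (τ₁ ^ ((27:ℝ)*τ₁) * (1 - τ₁) ^ ((27:ℝ)*(1 - τ₁)))) :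
    τ₀ ^ ((2:ℝ)*τ₀) * (1 - τ₀) ^ ((2:ℝ)*(1 - τ₀)) >
      2 * (τ₁ ^ ((3:ℝ)*τ₁) * (1 - τ₁) ^ ((3:ℝ)*(1 - τ₁))) := by
  obtain ⟨ha0, ha1⟩ := h₀
  obtain ⟨hb0, hb1⟩ := h₁
  have ha1' : (0:ℝ) ≤ 1 - τ₀ := by linarith
  have hb1' : (0:ℝ) ≤ 1 - τ₁ := by linarith
  set A : ℝ := τ₀ ^ τ₀ * (1 - τ₀) ^ (1 - τ₀) with hA
  set B : ℝ := τ₁ ^ τ₁ * (1 - τ₁) ^ (1 - τ₁) with hB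
  have hApos : 0 < A :=
    mul_pos (Real.rpow_pos_of_pos ha0 _) (Real.rpow_pos_of_pos (by linarith) _)
  have hBpos : 0 < B :=
    mul_pos (Real.rpow_pos_of_pos hb0 _) (Real.rpow_pos_of_pos (by linarith) _)
  have hBhalf : (1:ℝ) ≤ 2 * B := gmean_half τ₁ hb0 (by linarith)
  have e8 : τ₀ ^ ((8:ℝ)*τ₀) * (1 - τ₀) ^ ((8:ℝ)*(1 - τ₀)) = A ^ (8:ℕ) := by
    have := rpow_natmul τ₀ τ₀ (le_of_lt ha0) 8
    have := rpow_natmul (1 - τ₀) (1 - τ₀) ha1' 8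
    push_cast at *
    rw [‹τ₀ ^ ((8:ℝ) * τ₀) = _›, ‹(1 - τ₀) ^ ((8:ℝ) * (1 - τ₀)) = _›, hA, mul_pow]
  have e2 : τ₀ ^ ((2:ℝ)*τ₀) * (1 - τ₀) ^ ((2:ℝ)*(1 - τ₀)) = A ^ (2:ℕ) := by
    have := rpow_natmul τ₀ τ₀ (le_of_lt ha0) 2
    have := rpow_natmul (1 - τ₀) (1 - τ₀) ha1' 2
    push_cast at *
    rw [‹τ₀ ^ ((2:ℝ) * τ₀) = _›, ‹(1 - τ₀) ^ ((2:ℝ) * (1 - τ₀)) = _›, hA, mul_pow]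
  have e27 : τ₁ ^ ((27:ℝ)*τ₁) * (1 - τ₁) ^ ((27:ℝ)*(1 - τ₁)) = B ^ (27:ℕ) := by
    have := rpow_natmul τ₁ τ₁ (le_of_lt hb0) 27
    have := rpow_natmul (1 - τ₁) (1 - τ₁) hb1' 27
    push_cast at *
    rw [‹τ₁ ^ ((27:ℝ) * τ₁) = _›, ‹(1 - τ₁) ^ ((27:ℝ) * (1 - τ₁)) = _›, hB, mul_pow]
  have e3 : τ₁ ^ ((3:ℝ)*τ₁) * (1 - τ₁) ^ ((3:ℝ)*(1 - τ₁)) = B ^ (3:ℕ) := by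
    have := rpow_natmul τ₁ τ₁ (le_of_lt hb0) 3
    have := rpow_natmul (1 - τ₁) (1 - τ₁) hb1' 3
    push_cast at *
    rw [‹τ₁ ^ ((3:ℝ) * τ₁) = _›, ‹(1 - τ₁) ^ ((3:ℝ) * (1 - τ₁)) = _›, hB, mul_pow]
  rw [e8, e27] at h
  rw [e2, e3]
  -- reduce to A^2 > 2*B^3
  have h15 : (1:ℝ) ≤ (2 * B) ^ (15:ℕ) := one_le_pow₀ hBhalf
  have key : (2 * B ^ (3:ℕ)) ^ (4:ℕ) < (A ^ (2:ℕ)) ^ (4:ℕ) := by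
    have heq : (2:ℝ) ^ (19:ℕ) * B ^ (27:ℕ) = (2 * B ^ (3:ℕ)) ^ (4:ℕ) * (2 * B) ^ (15:ℕ) := by
      ring
    have hpos : (0:ℝ) < (2 * B ^ (3:ℕ)) ^ (4:ℕ) := by positivity
    calc (2 * B ^ (3:ℕ)) ^ (4:ℕ) = (2 * B ^ (3:ℕ)) ^ (4:ℕ) * 1 := (mul_one _).symm
      _ ≤ (2 * B ^ (3:ℕ)) ^ (4:ℕ) * (2 * B) ^ (15:ℕ) := by
          exact mul_le_mul_of_nonneg_left h15 (le_of_lt hpos)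
      _ = (2:ℝ) ^ (19:ℕ) * B ^ (27:ℕ) := heq.symm
      _ < A ^ (8:ℕ) := h
      _ = (A ^ (2:ℕ)) ^ (4:ℕ) := by ring
  exact lt_of_pow_lt_pow_left₀ 4 (by positivity) key
end

section
/- Let τ ∈ (0, 1/2) satisfy (1-2τ)^{1-2τ} > 2^{2(1-τ)} τ^τ (1-τ)^{3(1-τ)}. Then there exists ζ > 1 and N₀ such that for all N ≥ N₀, b(3N, ⌈3τN⌉) > ζ^{√N} · b(N, ⌈2τN⌉), where b(N,k) = 2^{-N} C(N,k). -/
/-- The symmetric binomial probability mass function `b(N,k) = 2⁻ᴺ C(N,k)`. -/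
noncomputable def binomMass (N k : ℕ) : ℝ := (N.choose k : ℝ) / 2 ^ N

/-!
The `k`-th term `C(n,k) k^k (n-k)^(n-k)` of the binomial expansion of `n^n = (k + (n-k))^n` is
its largest, so `log C(n,k) = n log n - k log k - (n-k) log (n-k)` up to `log (n+1)`. For
`k = ⌈p n⌉` the right side is `n h(p) + O(log n)`, `h` the binary entropy in nats, since
`x ↦ x log x` has slope `log x + 1` and the ceiling moves `k` by less than one. Hence
`log b(3N,⌈3τN⌉) - log b(N,⌈2τN⌉) = (3 h(τ) - h(2τ) - 2 log 2) N + O(log N)`; the hypothesis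
says, after taking logarithms, that this rate is positive, so the difference eventually
exceeds `√N`, which is the claim with `ζ = e`.
-/

open Finset Real Filter

namespace Nat

variable {n k j : ℕ}

def binomialTerm (n k j : ℕ) : ℕ := n.choose j * k ^ j * (n - k) ^ (n - j)

theorem sum_binomialTerm (hk : k ≤ n) : ∑ j ∈ range (n + 1), binomialTerm n k j = n ^ n := by
  have h := add_pow k (n - k) n
  rw [Nat.add_sub_cancel' hk] at h
  rw [h]
  exact sum_congr rfl fun j _ => by rw [binomialTerm, Nat.cast_id]; ring

theorem binomialTerm_and_succ_eq_of_lt (hj : j < n) :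
    binomialTerm n k j = n.choose j * (n - k) * (k ^ j * (n - k) ^ (n - (j + 1))) ∧
      binomialTerm n k (j + 1) = n.choose (j + 1) * k * (k ^ j * (n - k) ^ (n - (j + 1))) := by
  constructor
  · rw [binomialTerm, show n - j = n - (j + 1) + 1 by omega, pow_succ]; ring
  · rw [binomialTerm, pow_succ]; ring

theorem binomialTerm_le_succ (hjk : j < k) (hk : k ≤ n) :
    binomialTerm n k j ≤ binomialTerm n k (j + 1) := by
  have hc : n.choose j * (n - k) ≤ n.choose (j + 1) * k := by
    refine Nat.le_of_mul_le_mul_right ?_ (succ_pos j)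
    rw [mul_right_comm _ k, choose_succ_right_eq, mul_assoc, mul_assoc]
    exact Nat.mul_le_mul_left _ (Nat.mul_le_mul (by omega) hjk)
  obtain ⟨h₀, h₁⟩ := binomialTerm_and_succ_eq_of_lt (k := k) (show j < n by omega)
  rw [h₀, h₁]
  exact Nat.mul_le_mul_right _ hc

theorem binomialTerm_succ_le (hkj : k ≤ j) : binomialTerm n k (j + 1) ≤ binomialTerm n k j := by
  rcases lt_or_ge j n with hjn | hnj
  · have hc : n.choose (j + 1) * k ≤ n.choose j * (n - k) := by
      refine Nat.le_of_mul_le_mul_right ?_ (succ_pos j)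
      rw [mul_right_comm _ k, choose_succ_right_eq, mul_assoc, mul_assoc]
      exact Nat.mul_le_mul_left _ (Nat.mul_le_mul (by omega) (by omega))
    obtain ⟨h₀, h₁⟩ := binomialTerm_and_succ_eq_of_lt (k := k) hjn
    rw [h₀, h₁]
    exact Nat.mul_le_mul_right _ hc
  · simp [binomialTerm, choose_eq_zero_of_lt (show n < j + 1 by omega)]

theorem binomialTerm_le_binomialTerm_self (hk : k ≤ n) (j : ℕ) :
    binomialTerm n k j ≤ binomialTerm n k k := by
  rcases le_total j k with hjk | hkj
  · induction hjk using Nat.decreasingInduction with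
    | self => rfl
    | of_succ i hi ih => exact (binomialTerm_le_succ hi hk).trans ih
  · exact Nat.rel_of_forall_rel_succ_of_le_of_le (· ≥ ·) (fun i hi => binomialTerm_succ_le hi)
      le_rfl hkj

theorem binomialTerm_self_le_pow (hk : k ≤ n) : binomialTerm n k k ≤ n ^ n := by
  rw [← sum_binomialTerm hk]
  exact single_le_sum (fun _ _ => Nat.zero_le _) (mem_range.2 (by omega))

theorem pow_le_succ_mul_binomialTerm_self (hk : k ≤ n) :
    n ^ n ≤ (n + 1) * binomialTerm n k k := by
  rw [← sum_binomialTerm hk]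
  simpa [add_comm] using
    sum_le_card_nsmul (range (n + 1)) _ _ fun j _ => binomialTerm_le_binomialTerm_self hk j

theorem binomialTerm_self_pos (hk : k ≤ n) : 0 < binomialTerm n k k :=
  Nat.mul_pos (Nat.mul_pos (choose_pos hk) pow_self_pos) pow_self_pos

end Nat

noncomputable def binomEntropy (n k : ℝ) : ℝ := n * log n - k * log k - (n - k) * log (n - k)

theorem mul_log_le_mul_log {x y : ℝ} (hx : 1 ≤ x) (hxy : x ≤ y) : x * log x ≤ y * log y := by
  have h₀ : 0 ≤ log x := log_nonneg hx
  have h₁ : log x ≤ log y := log_le_log (by linarith) hxy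
  nlinarith

theorem mul_log_sub_mul_log_le {x y : ℝ} (hx : 0 < x) (hxy : x ≤ y) :
    y * log y - x * log x ≤ (y - x) * (log y + 1) := by
  have hy : 0 < y := hx.trans_le hxy
  have h : log (y / x) ≤ y / x - 1 := log_le_sub_one_of_pos (by positivity)
  rw [log_div hy.ne' hx.ne', div_sub_one hx.ne', le_div_iff₀ hx] at h
  nlinarith

theorem abs_binomEntropy_sub_le {n a k : ℝ} (ha : 1 ≤ a) (hak : a ≤ k) (hka : k ≤ a + 1)
    (hkn : k + 1 ≤ n) : |binomEntropy n k - binomEntropy n a| ≤ log n + 1 := by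
  have hlog_k : log k ≤ log n := log_le_log (by linarith) (by linarith)
  have hlog_na : log (n - a) ≤ log n := log_le_log (by linarith) (by linarith)
  have hk₀ : 0 ≤ log k := log_nonneg (by linarith)
  have hna₀ : 0 ≤ log (n - a) := log_nonneg (by linarith)
  rw [abs_sub_le_iff, binomEntropy, binomEntropy]
  constructor
  · have := mul_log_le_mul_log ha hak
    have := mul_log_sub_mul_log_le (x := n - k) (y := n - a) (by linarith) (by linarith)
    nlinarith
  · have := mul_log_sub_mul_log_le (by linarith) hak
    have := mul_log_le_mul_log (x := n - k) (y := n - a) (by linarith) (by linarith)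
    nlinarith

theorem binomEntropy_mul_self {n p : ℝ} (hn : 0 < n) (hp₀ : 0 < p) (hp₁ : p < 1) :
    binomEntropy n (p * n) = n * binEntropy p := by
  rw [binomEntropy, binEntropy, log_inv, log_inv, show n - p * n = (1 - p) * n by ring,
    log_mul hp₀.ne' hn.ne', log_mul (by linarith) hn.ne']
  ring

theorem two_mul_log_two_add_binEntropy_lt {τ : ℝ} (hτ₀ : 0 < τ) (hτ₁ : τ < 1 / 2)
    (h : 2 ^ (2 * (1 - τ)) * τ ^ τ * (1 - τ) ^ (3 * (1 - τ)) < (1 - 2 * τ) ^ (1 - 2 * τ)) :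
    2 * log 2 + binEntropy (2 * τ) < 3 * binEntropy τ := by
  have h₁ : 0 < 1 - τ := by linarith
  have h₂ : 0 < 1 - 2 * τ := by linarith
  have hlog := log_lt_log (by positivity) h
  rw [log_rpow h₂, log_mul (by positivity) (by positivity), log_mul (by positivity) (by positivity),
    log_rpow two_pos, log_rpow hτ₀, log_rpow h₁] at hlog
  rw [binEntropy, binEntropy, log_inv, log_inv, log_inv, log_inv, log_mul two_ne_zero hτ₀.ne']
  linarith

theorem log_binomialTerm_self {n k : ℕ} (hk : k ≤ n) :
    log (n.binomialTerm k k) = log (n.choose k) + k * log k + (n - k) * log (n - k) := by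
  have hc : (n.choose k : ℝ) ≠ 0 := by exact_mod_cast (Nat.choose_pos hk).ne'
  have hk' : (k : ℝ) ^ k ≠ 0 := by exact_mod_cast (Nat.pow_self_pos).ne'
  have hnk : ((n - k : ℕ) : ℝ) ^ (n - k) ≠ 0 := by exact_mod_cast (Nat.pow_self_pos).ne'
  rw [Nat.binomialTerm, Nat.cast_mul, Nat.cast_mul, Nat.cast_pow, Nat.cast_pow,
    log_mul (mul_ne_zero hc hk') hnk, log_mul hc hk', log_pow, log_pow, Nat.cast_sub hk]

theorem log_choose_le_binomEntropy {n k : ℕ} (hk : k ≤ n) :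
    log (n.choose k) ≤ binomEntropy n k := by
  have h := log_le_log (by exact_mod_cast Nat.binomialTerm_self_pos hk)
    (show (n.binomialTerm k k : ℝ) ≤ (n ^ n : ℕ) by exact_mod_cast Nat.binomialTerm_self_le_pow hk)
  rw [log_binomialTerm_self hk, Nat.cast_pow, log_pow] at h
  rw [binomEntropy]
  linarith

theorem binomEntropy_sub_log_le_log_choose {n k : ℕ} (hk : k ≤ n) :
    binomEntropy n k - log (n + 1) ≤ log (n.choose k) := by
  have h := log_le_log (by exact_mod_cast Nat.pow_self_pos)
    (show ((n ^ n : ℕ) : ℝ) ≤ ((n + 1) * n.binomialTerm k k : ℕ) by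
      exact_mod_cast Nat.pow_le_succ_mul_binomialTerm_self hk)
  rw [Nat.cast_pow, log_pow, Nat.cast_mul, log_mul (by positivity)
    (by exact_mod_cast (Nat.binomialTerm_self_pos hk).ne'), log_binomialTerm_self hk] at h
  push_cast at h
  rw [binomEntropy]
  linarith

theorem abs_log_choose_ceil_sub_le {n : ℕ} {p : ℝ} (hp : 1 ≤ p * n) (hpn : p * n + 2 ≤ n) :
    |log (n.choose ⌈p * n⌉₊) - n * binEntropy p| ≤ 2 * log (n + 1) + 1 := by
  have hn : (0 : ℝ) < n := by linarith
  have hp₀ : 0 < p := pos_of_mul_pos_left (by linarith) hn.le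
  have hp₁ : p < 1 := by nlinarith
  have hceil : (⌈p * n⌉₊ : ℝ) ≤ p * n + 1 := (Nat.ceil_lt_add_one (by linarith)).le
  have hk : ⌈p * n⌉₊ ≤ n := Nat.ceil_le.2 (by linarith)
  have hE := abs_binomEntropy_sub_le (n := n) hp (Nat.le_ceil _) hceil (by linarith)
  rw [binomEntropy_mul_self hn hp₀ hp₁] at hE
  have hlog : log n ≤ log (n + 1) := log_le_log hn (by linarith)
  have hupper := log_choose_le_binomEntropy hk
  have hlower := binomEntropy_sub_log_le_log_choose hk
  rw [abs_le] at hE ⊢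
  constructor <;> linarith [hE.1, hE.2]

theorem binomMass_pos {n k : ℕ} (hk : k ≤ n) : 0 < binomMass n k :=
  div_pos (by exact_mod_cast Nat.choose_pos hk) (by positivity)

theorem log_binomMass {n k : ℕ} (hk : k ≤ n) :
    log (binomMass n k) = log (n.choose k) - n * log 2 := by
  rw [binomMass, log_div (by exact_mod_cast (Nat.choose_pos hk).ne') (by positivity), log_pow]

theorem eventually_one_le_mul_and_mul_add_two_le {p : ℝ} (hp₀ : 0 < p) (hp₁ : p < 1) :
    ∀ᶠ x : ℝ in atTop, 1 ≤ p * x ∧ p * x + 2 ≤ x := by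
  filter_upwards [(tendsto_id.const_mul_atTop hp₀).eventually_ge_atTop 1,
    (tendsto_id.const_mul_atTop (sub_pos.2 hp₁)).eventually_ge_atTop 2] with x h₁ h₂
  exact ⟨h₁, by simp only [id] at h₂; linarith⟩

theorem eventually_sqrt_add_log_lt {c : ℝ} (hc : 0 < c) :
    ∀ᶠ x : ℝ in atTop, √x + 4 * log (3 * x + 1) + 2 < c * x := by
  filter_upwards [eventually_ge_atTop 1, eventually_gt_atTop ((19 / c) ^ 2)] with x hx₁ hx
  have hs₁ : 1 ≤ √x := one_le_sqrt.2 hx₁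
  have hs : 19 / c < √x := lt_sqrt_of_sq_lt hx
  have hlog : log (3 * x + 1) ≤ 4 * √x := by
    have h := log_le_rpow_div (x := 4 * x) (by positivity) (by norm_num : (0 : ℝ) < 1 / 2)
    rw [← sqrt_eq_rpow, sqrt_mul (by norm_num), show √(4 : ℝ) = 2 by norm_num] at h
    calc log (3 * x + 1) ≤ log (4 * x) := log_le_log (by positivity) (by linarith)
      _ ≤ 4 * √x := by linarith
  have hcx : 19 * √x < c * x := by
    rw [div_lt_iff₀ hc] at hs
    nlinarith [mul_self_sqrt (show 0 ≤ x by linarith)]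
  linarith

theorem log_binomMass_sub_log_binomMass_ge {τ : ℝ} {N : ℕ} (h₁ : 1 ≤ 2 * τ * N)
    (h₂ : 2 * τ * N + 2 ≤ N) :
    (3 * binEntropy τ - binEntropy (2 * τ) - 2 * log 2) * N - 4 * log (3 * N + 1) - 2 ≤
      log (binomMass (3 * N) ⌈3 * τ * N⌉₊) - log (binomMass N ⌈2 * τ * N⌉₊) := by
  have hτN : 0 ≤ τ * N := by linarith
  have h₃ : τ * ((3 * N : ℕ) : ℝ) = 3 * τ * N := by push_cast; ring
  have hk₃ := abs_log_choose_ceil_sub_le (n := 3 * N) (p := τ)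
    (by rw [h₃]; linarith) (by rw [h₃]; push_cast; linarith)
  have hk₂ := abs_log_choose_ceil_sub_le h₁ h₂
  have hlog : log (N + 1) ≤ log (3 * N + 1) := log_le_log (by positivity) (by linarith)
  rw [h₃] at hk₃
  rw [log_binomMass (Nat.ceil_le.2 (by push_cast; linarith)),
    log_binomMass (Nat.ceil_le.2 (by linarith))]
  push_cast at hk₃ ⊢
  rw [abs_le] at hk₃ hk₂
  linarith [hk₃.1, hk₂.2]

/-- If `τ ∈ (0,1/2)` satisfies `(1-2τ)^{1-2τ} > 2^{2(1-τ)} τ^τ (1-τ)^{3(1-τ)}`, then there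
exist `ζ > 1` and `N₀` such that for all `N ≥ N₀`,
`b(3N, ⌈3τN⌉) > ζ^{√N} · b(N, ⌈2τN⌉)`. -/
theorem binomial_ratio_exponential (τ : ℝ) (hτ : τ ∈ Set.Ioo (0 : ℝ) (1/2))
    (h : (1 - 2*τ) ^ (1 - 2*τ) > 2 ^ (2*(1 - τ)) * τ ^ τ * (1 - τ) ^ (3*(1 - τ))) :
    ∃ ζ : ℝ, 1 < ζ ∧ ∃ N₀ : ℕ, ∀ N : ℕ, N₀ ≤ N →
      binomMass (3*N) ⌈3*τ*N⌉₊ > ζ ^ Real.sqrt N * binomMass N ⌈2*τ*N⌉₊ := by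
  obtain ⟨hτ₀, hτ₁⟩ := hτ
  have hc : 0 < 3 * binEntropy τ - binEntropy (2 * τ) - 2 * log 2 := by
    linarith [two_mul_log_two_add_binEntropy_lt hτ₀ hτ₁ h]
  obtain ⟨N₀, hN₀⟩ := eventually_atTop.1 <| tendsto_natCast_atTop_atTop.eventually <|
    (eventually_one_le_mul_and_mul_add_two_le (p := 2 * τ) (by linarith) (by linarith)).and
      (eventually_sqrt_add_log_lt hc)
  refine ⟨exp 1, one_lt_exp_iff.2 one_pos, N₀, fun N hN => ?_⟩
  obtain ⟨⟨h₁, h₂⟩, hsqrt⟩ := hN₀ N hN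
  have hratio := log_binomMass_sub_log_binomMass_ge h₁ h₂
  have hb₂ := binomMass_pos (Nat.ceil_le.2 (show 2 * τ * N ≤ N by linarith))
  have hb₃ := binomMass_pos (Nat.ceil_le.2 (show 3 * τ * N ≤ ((3 * N : ℕ) : ℝ) by
    push_cast; linarith))
  rw [gt_iff_lt, exp_one_rpow, ← log_lt_log_iff (by positivity) hb₃,
    log_mul (exp_pos _).ne' hb₂.ne', log_exp]
  linarith
end

section
/- Fix w ≥ 1 and u ∈ ℤ², and let N(u) = {v ∈ ℤ² : ‖u-v‖_∞ ≤ w}. For each line ℓ through u, the associated rotated lower neighbourhoods are determined by which of the (2w+1)² - 1 nonzero offset vectors lie strictly below ℓ together with at most two half-line segments. As ℓ rotates through angle 2π, each node of N(u) enters and leaves the associated set exactly once; consequently the number of distinct rotated lower neighbourhoods of u is at most 2(2w+1)². -/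
/-- The ℓ∞-ball of radius `w` about `u` in `ℤ²`. -/
def nbhd (u : ℤ × ℤ) (w : ℤ) : Set (ℤ × ℤ) := {v | max |u.1 - v.1| |u.2 - v.2| ≤ w}

/-- The displacement of `v` from `u`, as a vector in `ℝ²`. -/
def disp (u v : ℤ × ℤ) : ℝ × ℝ := (((v.1 - u.1 : ℤ) : ℝ), ((v.2 - u.2 : ℤ) : ℝ))

/-- `L` is a rotated lower neighbourhood of `u` (radius `w`): for some nonzero direction
vector `d` of the defining line `ℓ` through `u`, `L` consists of the nodes of `N(u)` strictly
below `ℓ` (negative cross product with `d`) together with the nodes of `N(u)` on one of the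
two closed half-line segments of `ℓ` from `u` to the boundary. -/
def IsRotatedLowerNbhd (u : ℤ × ℤ) (w : ℤ) (L : Set (ℤ × ℤ)) : Prop :=
  ∃ d : ℝ × ℝ, d ≠ 0 ∧ ∃ j : Bool,
    L = {v ∈ nbhd u w | (disp u v).1 * d.2 - (disp u v).2 * d.1 < 0} ∪
        {v ∈ nbhd u w | (disp u v).1 * d.2 - (disp u v).2 * d.1 = 0 ∧
          (if j then 0 ≤ (disp u v).1 * d.1 + (disp u v).2 * d.2
           else (disp u v).1 * d.1 + (disp u v).2 * d.2 ≤ 0)}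

namespace RLNaux

def cnd (d : ℝ × ℝ) (j : Bool) (z : ℝ × ℝ) : Prop :=
  z.1 * d.2 - z.2 * d.1 < 0 ∨ (z.1 * d.2 - z.2 * d.1 = 0 ∧
    (if j then 0 ≤ z.1 * d.1 + z.2 * d.2 else z.1 * d.1 + z.2 * d.2 ≤ 0))

def lset (u : ℤ × ℤ) (w : ℤ) (d : ℝ × ℝ) (j : Bool) : Set (ℤ × ℤ) :=
  {v ∈ nbhd u w | (disp u v).1 * d.2 - (disp u v).2 * d.1 < 0} ∪
  {v ∈ nbhd u w | (disp u v).1 * d.2 - (disp u v).2 * d.1 = 0 ∧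
    (if j then 0 ≤ (disp u v).1 * d.1 + (disp u v).2 * d.2
     else (disp u v).1 * d.1 + (disp u v).2 * d.2 ≤ 0)}

lemma lset_eq_sep (u : ℤ × ℤ) (w : ℤ) (d : ℝ × ℝ) (j : Bool) :
    lset u w d j = {v ∈ nbhd u w | cnd d j (disp u v)} := by
  ext v
  simp only [lset, cnd, Set.mem_union, Set.mem_setOf_eq]
  tauto

lemma isRLN_iff (u : ℤ × ℤ) (w : ℤ) (L : Set (ℤ × ℤ)) :
    IsRotatedLowerNbhd u w L ↔ ∃ d : ℝ × ℝ, d ≠ 0 ∧ ∃ j : Bool, L = lset u w d j :=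
  Iff.rfl

lemma mem_nbhd {u v : ℤ × ℤ} {w : ℤ} :
    v ∈ nbhd u w ↔ |u.1 - v.1| ≤ w ∧ |u.2 - v.2| ≤ w := by
  simp [nbhd, Set.mem_setOf_eq, max_le_iff]

lemma disp_eq_zero_iff {u v : ℤ × ℤ} : disp u v = 0 ↔ v = u := by
  simp [disp, Prod.ext_iff, Int.cast_eq_zero, sub_eq_zero]

def refl2 (u v : ℤ × ℤ) : ℤ × ℤ := (2*u.1 - v.1, 2*u.2 - v.2)

lemma disp_refl2 (u v : ℤ × ℤ) : disp u (refl2 u v) = -disp u v := by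
  simp only [disp, refl2, Prod.neg_mk, Prod.mk.injEq]
  constructor <;> · push_cast; ring

lemma refl2_mem {u v : ℤ × ℤ} {w : ℤ} (h : v ∈ nbhd u w) : refl2 u v ∈ nbhd u w := by
  rw [mem_nbhd] at h ⊢
  simp only [refl2, abs_le] at h ⊢
  omega

lemma vec_pos {d : ℝ × ℝ} (hd : d ≠ 0) : 0 < d.1 * d.1 + d.2 * d.2 := by
  have h : d.1 ≠ 0 ∨ d.2 ≠ 0 := by
    by_contra h
    push_neg at h
    exact hd (Prod.ext h.1 h.2)
  rcases h with h | h <;>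
    nlinarith [mul_self_pos.mpr h, mul_self_nonneg d.1, mul_self_nonneg d.2]

lemma id_par1 (y1 y2 d1 d2 z1 z2 : ℝ) (h : y1*d2 - y2*d1 = 0) :
    (z1*d2 - z2*d1) * (y1*y1 + y2*y2) = (z1*y2 - z2*y1) * (y1*d1 + y2*d2) := by
  linear_combination (z1*y1 + z2*y2) * h

lemma id_par2 (y1 y2 d1 d2 z1 z2 : ℝ) (h : y1*d2 - y2*d1 = 0) :
    (z1*d1 + z2*d2) * (y1*y1 + y2*y2) = (z1*y1 + z2*y2) * (y1*d1 + y2*d2) := by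
  linear_combination (z2*y1 - z1*y2) * h

lemma id_par3 (y1 y2 d1 d2 z1 z2 : ℝ) (h : z1*y2 - z2*y1 = 0) :
    (z1*d2 - z2*d1) * (y1*y1 + y2*y2) = (z1*y1 + z2*y2) * (y1*d2 - y2*d1) := by
  linear_combination (y1*d1 + y2*d2) * h

lemma id_main (y1 y2 d1 d2 z1 z2 : ℝ) :
    (d1*d1 + d2*d2) * (z1*y2 - z2*y1) =
      (z1*d2 - z2*d1) * (y1*d1 + y2*d2) - (z1*d1 + z2*d2) * (y1*d2 - y2*d1) := by
  ring

/-- If `y` has cross zero and dot positive with `d`, the conditions for `d` and `y` agree. -/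
lemma cnd_par {d y : ℝ × ℝ} (j : Bool) (hcr : y.1*d.2 - y.2*d.1 = 0)
    (hyy : 0 < y.1*y.1 + y.2*y.2) (hdty : 0 < y.1*d.1 + y.2*d.2) (z : ℝ × ℝ) :
    cnd d j z ↔ cnd y j z := by
  have i1 := id_par1 y.1 y.2 d.1 d.2 z.1 z.2 hcr
  have i2 := id_par2 y.1 y.2 d.1 d.2 z.1 z.2 hcr
  have e1 : z.1*d.2 - z.2*d.1 < 0 ↔ z.1*y.2 - z.2*y.1 < 0 :=
    ⟨fun h => by nlinarith, fun h => by nlinarith⟩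
  have e2 : z.1*d.2 - z.2*d.1 = 0 ↔ z.1*y.2 - z.2*y.1 = 0 := by
    constructor
    · intro h
      have h0 : (z.1*y.2 - z.2*y.1) * (y.1*d.1 + y.2*d.2) = 0 := by
        rw [← i1, h, zero_mul]
      rcases mul_eq_zero.mp h0 with h' | h'
      · exact h'
      · exact absurd h' (ne_of_gt hdty)
    · intro h
      have h0 : (z.1*d.2 - z.2*d.1) * (y.1*y.1 + y.2*y.2) = 0 := by
        rw [i1, h, zero_mul]
      rcases mul_eq_zero.mp h0 with h' | h'
      · exact h'
      · exact absurd h' (ne_of_gt hyy)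
  have e3 : z.1*d.1 + z.2*d.2 ≤ 0 ↔ z.1*y.1 + z.2*y.2 ≤ 0 :=
    ⟨fun h => by nlinarith, fun h => by nlinarith⟩
  have e4 : 0 ≤ z.1*d.1 + z.2*d.2 ↔ 0 ≤ z.1*y.1 + z.2*y.2 :=
    ⟨fun h => by nlinarith, fun h => by nlinarith⟩
  unfold cnd
  cases j <;> simp only [if_true, if_false, Bool.false_eq_true, Bool.true_eq_false] <;>
    rw [e1, e2] <;> [rw [e3]; rw [e4]]

/-- Main structural lemma: each rotated lower neighbourhood is realized by a lattice
direction from the (punctured) ball. -/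
lemma exists_rep (w : ℤ) (hw : 1 ≤ w) (u : ℤ × ℤ) (d : ℝ × ℝ) (hd : d ≠ 0) (j : Bool) :
    ∃ p ∈ nbhd u w, ∃ k : Bool, lset u w d j = lset u w (disp u p) k := by
  by_cases hA : ∃ q ∈ nbhd u w, q ≠ u ∧ (disp u q).1 * d.2 - (disp u q).2 * d.1 = 0
  · -- Case A: some lattice point of the ball lies on the line.
    obtain ⟨q, hq, hqu, hq0⟩ := hA
    have hx : disp u q ≠ 0 := fun h => hqu (disp_eq_zero_iff.mp h)
    set x := disp u q with hxdef
    have hxx : 0 < x.1*x.1 + x.2*x.2 := vec_pos hx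
    have hdd : 0 < d.1*d.1 + d.2*d.2 := vec_pos hd
    have hdt : x.1*d.1 + x.2*d.2 ≠ 0 := by
      intro h
      apply hx
      have h1 : x.1 * (d.1*d.1 + d.2*d.2) = 0 := by linear_combination d.1*h + d.2*hq0
      have h2 : x.2 * (d.1*d.1 + d.2*d.2) = 0 := by linear_combination d.2*h - d.1*hq0
      have h1' : x.1 = 0 := by
        rcases mul_eq_zero.mp h1 with h' | h'
        · exact h'
        · exact absurd h' (ne_of_gt hdd)
      have h2' : x.2 = 0 := by
        rcases mul_eq_zero.mp h2 with h' | h'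
        · exact h'
        · exact absurd h' (ne_of_gt hdd)
      exact Prod.ext h1' h2'
    rcases hdt.lt_or_gt with hneg | hpos
    · refine ⟨refl2 u q, refl2_mem hq, j, ?_⟩
      have hy : disp u (refl2 u q) = -x := disp_refl2 u q
      rw [lset_eq_sep, lset_eq_sep, hy]
      have hcr' : (-x).1*d.2 - (-x).2*d.1 = 0 := by
        simp only [Prod.fst_neg, Prod.snd_neg]; linear_combination -hq0
      have hyy' : 0 < (-x).1*(-x).1 + (-x).2*(-x).2 := by
        simp only [Prod.fst_neg, Prod.snd_neg]; nlinarith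
      have hdty' : 0 < (-x).1*d.1 + (-x).2*d.2 := by
        simp only [Prod.fst_neg, Prod.snd_neg]; nlinarith
      ext v
      simp only [Set.mem_setOf_eq]
      exact and_congr_right fun _ => cnd_par j hcr' hyy' hdty' (disp u v)
    · refine ⟨q, hq, j, ?_⟩
      rw [lset_eq_sep, lset_eq_sep, ← hxdef]
      ext v
      simp only [Set.mem_setOf_eq]
      exact and_congr_right fun _ => cnd_par j hq0 hxx hpos (disp u v)
  · -- Case B: no lattice point of the punctured ball lies on the line.
    push_neg at hA
    have hB : ∀ q ∈ nbhd u w, q ≠ u → (disp u q).1 * d.2 - (disp u q).2 * d.1 ≠ 0 :=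
      fun q hq hqu => hA q hq hqu
    -- the set of ball points strictly on the positive-cross side
    set T : Set (ℤ × ℤ) := {q ∈ nbhd u w | 0 < (disp u q).1 * d.2 - (disp u q).2 * d.1}
      with hT
    have hTfin : T.Finite := by
      have : (nbhd u w).Finite := by
        have : nbhd u w ⊆ ↑(Finset.Icc (u.1-w) (u.1+w) ×ˢ Finset.Icc (u.2-w) (u.2+w)) := by
          intro v hv
          rw [mem_nbhd, abs_le, abs_le] at hv
          simp only [Finset.coe_product, Set.mem_prod, Finset.mem_coe, Finset.mem_Icc]
          omega
        exact Set.Finite.subset (Finset.finite_toSet _) this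
      exact this.subset (Set.sep_subset _ _)
    have hTne : T.Nonempty := by
      have h1 : (u.1 + 1, u.2) ∈ nbhd u w := by
        rw [mem_nbhd]; simp; omega
      have hne : (u.1 + 1, u.2) ≠ u := by
        intro h; exact absurd (congrArg Prod.fst h) (by simp)
      have hdisp : disp u (u.1 + 1, u.2) = (1, 0) := by
        simp [disp]
      have hd2 : (1:ℝ) * d.2 - 0 * d.1 ≠ 0 := by
        have := hB _ h1 hne
        rwa [hdisp] at this
      rcases (sub_ne_zero.mp hd2).lt_or_gt.symm.imp id id with h | h
      · exact ⟨(u.1 + 1, u.2), h1, by rw [hdisp]; simpa using sub_pos.mpr h⟩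
      · refine ⟨refl2 u (u.1 + 1, u.2), ⟨refl2_mem h1, ?_⟩⟩
        rw [disp_refl2, hdisp]
        simp only [Prod.fst_neg, Prod.snd_neg]
        nlinarith [sub_neg.mpr h]
    obtain ⟨p, hpT, hpmax⟩ := Set.exists_max_image T
      (fun q => ((disp u q).1 * d.1 + (disp u q).2 * d.2) /
        ((disp u q).1 * d.2 - (disp u q).2 * d.1)) hTfin hTne
    obtain ⟨hp, hcp⟩ := hpT
    set y := disp u p with hydef
    have hy0 : y ≠ 0 := by
      intro h
      rw [h] at hcp
      simp at hcp
    have hyy : 0 < y.1*y.1 + y.2*y.2 := vec_pos hy0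
    have hdd : 0 < d.1*d.1 + d.2*d.2 := vec_pos hd
    -- key: everything with positive cross w.r.t. d has nonnegative cross w.r.t. y
    have key : ∀ v ∈ nbhd u w, 0 < (disp u v).1 * d.2 - (disp u v).2 * d.1 →
        0 ≤ (disp u v).1 * y.2 - (disp u v).2 * y.1 := by
      intro v hv hcv
      set z := disp u v with hzdef
      have hm := hpmax v ⟨hv, hcv⟩
      have hineq : (z.1*d.1 + z.2*d.2) * (y.1*d.2 - y.2*d.1) ≤
          (y.1*d.1 + y.2*d.2) * (z.1*d.2 - z.2*d.1) := by
        have := (div_le_div_iff₀ hcv hcp).mp hm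
        linarith
      have hid := id_main y.1 y.2 d.1 d.2 z.1 z.2
      nlinarith
    refine ⟨p, hp, false, ?_⟩
    rw [lset_eq_sep, lset_eq_sep, ← hydef]
    ext v
    simp only [Set.mem_setOf_eq]
    refine and_congr_right fun hv => ?_
    by_cases hvu : v = u
    · have h0 : disp u v = 0 := disp_eq_zero_iff.mpr hvu
      rw [h0]
      unfold cnd
      cases j <;> simp
    · set z := disp u v with hzdef
      have hcz : z.1 * d.2 - z.2 * d.1 ≠ 0 := hB v hv hvu
      have lhs_iff : cnd d j z ↔ z.1 * d.2 - z.2 * d.1 < 0 := by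
        unfold cnd
        constructor
        · rintro (h | ⟨h, -⟩)
          · exact h
          · exact absurd h hcz
        · exact Or.inl
      rw [lhs_iff]
      by_cases hzy : z.1 * y.2 - z.2 * y.1 = 0
      · -- z is parallel to y
        have i3 := id_par3 y.1 y.2 d.1 d.2 z.1 z.2 hzy
        have hcyd : 0 < y.1 * d.2 - y.2 * d.1 := hcp
        have hdtz : z.1*y.1 + z.2*y.2 ≠ 0 := by
          intro h
          apply hcz
          have : (z.1*d.2 - z.2*d.1) * (y.1*y.1 + y.2*y.2) = 0 := by
            rw [i3, h, zero_mul]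
          rcases mul_eq_zero.mp this with h' | h'
          · exact h'
          · exact absurd h' (ne_of_gt hyy)
        constructor
        · intro h
          refine Or.inr ⟨hzy, ?_⟩
          have hlt : (z.1*y.1 + z.2*y.2) * (y.1*d.2 - y.2*d.1) < 0 := by
            rw [← i3]; exact mul_neg_of_neg_of_pos h hyy
          rcases mul_neg_iff.mp hlt with ⟨h1, h2⟩ | ⟨h1, h2⟩
          · exact absurd h2 (not_lt.mpr hcyd.le)
          · exact h1.le
        · rintro (h | ⟨-, h⟩)
          · exact absurd hzy (ne_of_lt h)
          · rcases lt_or_eq_of_le h with h' | h'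
            · have hlt : (z.1*d.2 - z.2*d.1) * (y.1*y.1 + y.2*y.2) < 0 := by
                rw [i3]; exact mul_neg_of_neg_of_pos h' hcyd
              rcases mul_neg_iff.mp hlt with ⟨h1, h2⟩ | ⟨h1, h2⟩
              · exact absurd h2 (not_lt.mpr hyy.le)
              · exact h1
            · exact absurd h' hdtz
      · -- z is not parallel to y
        rcases hcz.lt_or_gt with hneg | hpos
        · -- cross with d negative: reflect
          have hrv := refl2_mem hv
          have hrd : disp u (refl2 u v) = -z := disp_refl2 u v
          have : 0 ≤ (-z).1 * y.2 - (-z).2 * y.1 := by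
            have := key (refl2 u v) hrv (by rw [hrd]; simp only [Prod.fst_neg, Prod.snd_neg]; nlinarith)
            rwa [hrd] at this
          have hzy' : z.1 * y.2 - z.2 * y.1 < 0 := by
            simp only [Prod.fst_neg, Prod.snd_neg] at this
            rcases lt_or_eq_of_le (by nlinarith : z.1 * y.2 - z.2 * y.1 ≤ 0) with h' | h'
            · exact h'
            · exact absurd h' hzy
          constructor
          · intro _; exact Or.inl hzy'
          · intro _; exact hneg
        · -- cross with d positive
          have h0 : 0 ≤ z.1 * y.2 - z.2 * y.1 := key v hv hpos
          have hzy' : 0 < z.1 * y.2 - z.2 * y.1 := lt_of_le_of_ne h0 (Ne.symm hzy)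
          constructor
          · intro h; exact absurd h (not_lt.mpr (le_of_lt hpos))
          · rintro (h | ⟨h, -⟩)
            · exact absurd h (not_lt.mpr h0)
            · exact absurd h hzy

end RLNaux

open RLNaux in
/-- As the defining line rotates through a full turn, each node of `N(u)` enters and leaves
the rotated lower neighbourhood exactly once; consequently the number of distinct rotated
lower neighbourhoods of `u` is at most `2(2w+1)²`. -/
theorem card_rotatedLowerNbhds_le (w : ℤ) (hw : 1 ≤ w) (u : ℤ × ℤ) :
    Set.ncard {L : Set (ℤ × ℤ) | IsRotatedLowerNbhd u w L} ≤ (2 * (2*w + 1)^2).toNat := by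
  classical
  set NB : Finset (ℤ × ℤ) := Finset.Icc (u.1-w) (u.1+w) ×ˢ Finset.Icc (u.2-w) (u.2+w) with hNB
  have hNBmem : ∀ p ∈ nbhd u w, p ∈ NB := by
    intro p hp
    rw [mem_nbhd, abs_le, abs_le] at hp
    simp only [hNB, Finset.mem_product, Finset.mem_Icc]
    omega
  set Q : Finset ((ℤ × ℤ) × Bool) := NB ×ˢ (Finset.univ : Finset Bool) with hQ
  set F : (ℤ × ℤ) × Bool → Set (ℤ × ℤ) := fun pj => lset u w (disp u pj.1) pj.2 with hF
  have hsub : {L : Set (ℤ × ℤ) | IsRotatedLowerNbhd u w L} ⊆ F '' ↑Q := by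
    intro L hL
    rw [Set.mem_setOf_eq, isRLN_iff] at hL
    obtain ⟨d, hd, j, rfl⟩ := hL
    obtain ⟨p, hp, k, hk⟩ := exists_rep w hw u d hd j
    refine ⟨(p, k), ?_, hk.symm⟩
    simp only [hQ, Finset.coe_product, Set.mem_prod, Finset.mem_coe, Finset.coe_univ,
      Set.mem_univ, and_true]
    exact hNBmem p hp
  have h1 : Set.ncard {L : Set (ℤ × ℤ) | IsRotatedLowerNbhd u w L} ≤ Set.ncard (F '' ↑Q) :=
    Set.ncard_le_ncard hsub (Q.finite_toSet.image F)
  have h2 : Set.ncard (F '' ↑Q) ≤ Set.ncard (↑Q : Set ((ℤ × ℤ) × Bool)) :=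
    Set.ncard_image_le Q.finite_toSet
  have h3 : Set.ncard (↑Q : Set ((ℤ × ℤ) × Bool)) = Q.card := Set.ncard_coe_finset Q
  have hIcc1 : (Finset.Icc (u.1-w) (u.1+w)).card = (2*w+1).toNat := by
    rw [Int.card_Icc]
    congr 1
    ring
  have hIcc2 : (Finset.Icc (u.2-w) (u.2+w)).card = (2*w+1).toNat := by
    rw [Int.card_Icc]
    congr 1
    ring
  have hQcard : Q.card = (2*w+1).toNat * (2*w+1).toNat * 2 := by
    rw [hQ, Finset.card_product, hNB, Finset.card_product, hIcc1, hIcc2]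
    simp
  obtain ⟨t, ht⟩ : ∃ t : ℕ, (2*w+1 : ℤ) = (t : ℤ) := ⟨(2*w+1).toNat, by omega⟩
  have ht' : (2*w+1).toNat = t := by omega
  have hgoal : (2 * (2*w + 1)^2).toNat = 2 * (t * t) := by
    have : (2 * (2*w + 1)^2 : ℤ) = ((2 * (t * t) : ℕ) : ℤ) := by
      rw [ht]; push_cast; ring
    rw [this, Int.toNat_natCast]
  rw [hgoal]
  calc Set.ncard {L : Set (ℤ × ℤ) | IsRotatedLowerNbhd u w L}
      ≤ Q.card := le_trans h1 (le_trans h2 (le_of_eq h3))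
    _ = (2*w+1).toNat * (2*w+1).toNat * 2 := hQcard
    _ = 2 * (t * t) := by rw [ht']; ring
end
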